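/- arXiv:1210.5102 — 8 statements merged into one kernel-verified Lean document; each statement's English description precedes it below -/
import Mathlib

section
/- If M : ℕ → ℝ is a positive log-convex sequence, then M has the Faà di Bruno property with constant C = max(M 1, 1): for all j ≥ 1 and all α₁, …, α_j ≥ 1 with α₁ + ⋯ + α_j = k, one has M j * M α₁ * ⋯ * M α_j ≤ C^k * M k. -/
lemma fdb_ratio (M : ℕ → ℝ) (hpos : ∀ k, 0 < M k)
    (hlc : ∀ k, 1 ≤ k → (M k) ^ 2 ≤ M (k - 1) * M (k + 1)) :
    ∀ n m, n ≤ m → M (n + 1) * M m ≤ M n * M (m + 1) := by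
  intro n m hnm
  induction m, hnm using Nat.le_induction with
  | base => rw [mul_comm]
  | succ m hm ih =>
    have hc := hlc (m + 1) (by omega)
    simp only [Nat.add_sub_cancel] at hc
    have h1 := mul_le_mul_of_nonneg_right ih (hpos (m + 1)).le
    have h2 := mul_le_mul_of_nonneg_left hc (hpos n).le
    nlinarith [hpos m, hpos n, hpos (m + 1), hpos (m + 2), hpos (n + 1)]

lemma fdb_key (M : ℕ → ℝ) (hpos : ∀ k, 0 < M k)
    (hlc : ∀ k, 1 ≤ k → (M k) ^ 2 ≤ M (k - 1) * M (k + 1)) :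
    ∀ a b, 1 ≤ a → 1 ≤ b → M a * M b ≤ M 1 * M (a + b - 1) := by
  intro a b ha hb
  obtain ⟨b', rfl⟩ : ∃ b', b = b' + 1 := ⟨b - 1, by omega⟩
  have harith : ∀ x : ℕ, x + (b' + 1) - 1 = x + b' := fun x => by omega
  induction a, ha using Nat.le_induction with
  | base => rw [harith 1, Nat.add_comm 1 b']
  | succ a ha ih =>
    rw [harith (a + 1)]
    rw [harith a] at ih
    have hr := fdb_ratio M hpos hlc a (a + b') (by omega)
    have h1 := mul_le_mul_of_nonneg_left ih (hpos (a + 1)).le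
    have h2 := mul_le_mul_of_nonneg_left hr (hpos 1).le
    have : a + b' + 1 = a + 1 + b' := by omega
    rw [this] at h2
    nlinarith [hpos a, hpos (a + 1), hpos 1, hpos (a + b'), hpos (a + 1 + b')]

lemma fdb_prod (M : ℕ → ℝ) (hpos : ∀ k, 0 < M k)
    (hlc : ∀ k, 1 ≤ k → (M k) ^ 2 ≤ M (k - 1) * M (k + 1)) :
    ∀ n (α : Fin (n + 1) → ℕ), (∀ i, 1 ≤ α i) →
      ∏ i, M (α i) ≤ M 1 ^ n * M ((∑ i, α i) - n) := by
  intro n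
  induction n with
  | zero => intro α hα; simp
  | succ n ih =>
    intro α hα
    rw [Fin.prod_univ_succ, Fin.sum_univ_succ]
    set S := ∑ i : Fin (n + 1), α i.succ with hSdef
    have hS : n + 1 ≤ S := by
      calc (n + 1 : ℕ) = ∑ _i : Fin (n + 1), 1 := by simp
        _ ≤ S := Finset.sum_le_sum (fun i _ => hα i.succ)
    have hih := ih (fun i => α i.succ) (fun i => hα i.succ)
    have hk := fdb_key M hpos hlc (α 0) (S - n) (hα 0) (by omega)
    have harith : α 0 + (S - n) - 1 = α 0 + S - (n + 1) := by omega
    rw [harith] at hk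
    calc M (α 0) * ∏ i : Fin (n + 1), M (α i.succ)
        ≤ M (α 0) * (M 1 ^ n * M (S - n)) :=
          mul_le_mul_of_nonneg_left hih (hpos (α 0)).le
      _ = M 1 ^ n * (M (α 0) * M (S - n)) := by ring
      _ ≤ M 1 ^ n * (M 1 * M (α 0 + S - (n + 1))) :=
          mul_le_mul_of_nonneg_left hk (pow_nonneg (hpos 1).le n)
      _ = M 1 ^ (n + 1) * M (α 0 + S - (n + 1)) := by ring

theorem logConvex_FdB (M : ℕ → ℝ)
    (hpos : ∀ k, 0 < M k)
    (hlc : ∀ k, 1 ≤ k → (M k) ^ 2 ≤ M (k - 1) * M (k + 1)) :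
    ∀ (j k : ℕ) (α : Fin j → ℕ), 1 ≤ j → (∀ i, 1 ≤ α i) →
      (∑ i, α i) = k →
      M j * ∏ i, M (α i) ≤ (max (M 1) 1) ^ k * M k := by
  intro j k α hj hα hsum
  obtain ⟨n, rfl⟩ : ∃ n, j = n + 1 := ⟨j - 1, by omega⟩
  have hk : n + 1 ≤ k := by
    rw [← hsum]
    calc (n + 1 : ℕ) = ∑ _i : Fin (n + 1), 1 := by simp
      _ ≤ ∑ i, α i := Finset.sum_le_sum (fun i _ => hα i)
  have hp := fdb_prod M hpos hlc n α hα
  rw [hsum] at hp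
  have hkey := fdb_key M hpos hlc (n + 1) (k - n) (by omega) (by omega)
  have harith : n + 1 + (k - n) - 1 = k := by omega
  rw [harith] at hkey
  set C := max (M 1) 1 with hC
  have hC1 : (1 : ℝ) ≤ C := le_max_right _ _
  have hMC : M 1 ≤ C := le_max_left _ _
  calc M (n + 1) * ∏ i, M (α i)
      ≤ M (n + 1) * (M 1 ^ n * M (k - n)) :=
        mul_le_mul_of_nonneg_left hp (hpos (n + 1)).le
    _ = M 1 ^ n * (M (n + 1) * M (k - n)) := by ring
    _ ≤ M 1 ^ n * (M 1 * M k) :=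
        mul_le_mul_of_nonneg_left hkey (pow_nonneg (hpos 1).le n)
    _ = M 1 ^ (n + 1) * M k := by ring
    _ ≤ C ^ (n + 1) * M k :=
        mul_le_mul_of_nonneg_right (pow_le_pow_left₀ (hpos 1).le hMC _) (hpos k).le
    _ ≤ C ^ k * M k :=
        mul_le_mul_of_nonneg_right (pow_le_pow_right₀ hC1 hk) (hpos k).le
end

section
/- If a positive sequence M : ℕ → ℝ satisfies M j * M k ≤ M 1 * M (j + k - 1) for all j, k ≥ 1, then M has the Faà di Bruno property: there exists C > 0 such that for all positive integers α₁, …, α_j with α₁ + ⋯ + α_j = k, M j * M α₁ * ⋯ * M α_j ≤ C^k * M k. -/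
theorem almostLogConvex_FdB (M : ℕ → ℝ)
    (hpos : ∀ k, 0 < M k)
    (halc : ∀ j k : ℕ, 1 ≤ j → 1 ≤ k → M j * M k ≤ M 1 * M (j + k - 1)) :
    ∃ C : ℝ, 0 < C ∧ ∀ (j k : ℕ) (α : Fin j → ℕ), 1 ≤ j → (∀ i, 1 ≤ α i) →
      (∑ i, α i) = k →
      M j * ∏ i, M (α i) ≤ C ^ k * M k := by
  have key : ∀ j : ℕ, ∀ α : Fin (j+1) → ℕ, (∀ i, 1 ≤ α i) →
      ∏ i, M (α i) ≤ M 1 ^ j * M ((∑ i, α i) - j) := by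
    intro j
    induction j with
    | zero => intro α hα; simp
    | succ n ih =>
      intro α hα
      rw [Fin.prod_univ_castSucc, Fin.sum_univ_castSucc]
      set S := ∑ i : Fin (n+1), α i.castSucc with hS
      have hSge : n + 1 ≤ S := by
        calc (n+1 : ℕ) = ∑ _i : Fin (n+1), 1 := by simp
        _ ≤ S := Finset.sum_le_sum fun i _ => hα _
      have h1 := ih (fun i => α i.castSucc) (fun i => hα _)
      have h2 := halc (S - n) (α (Fin.last (n+1))) (by omega) (hα _)
      have heq : S - n + α (Fin.last (n+1)) - 1 = S + α (Fin.last (n+1)) - (n+1) := by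
        have := hα (Fin.last (n+1)); omega
      calc (∏ i : Fin (n+1), M (α i.castSucc)) * M (α (Fin.last (n+1)))
          ≤ (M 1 ^ n * M (S - n)) * M (α (Fin.last (n+1))) :=
            mul_le_mul_of_nonneg_right h1 (hpos _).le
        _ = M 1 ^ n * (M (S - n) * M (α (Fin.last (n+1)))) := by ring
        _ ≤ M 1 ^ n * (M 1 * M (S + α (Fin.last (n+1)) - (n+1))) := by
            apply mul_le_mul_of_nonneg_left _ (pow_nonneg (hpos 1).le n)
            rw [← heq]; exact h2
        _ = M 1 ^ (n+1) * M (S + α (Fin.last (n+1)) - (n+1)) := by ring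
  refine ⟨max (M 1) 1 ^ 2, by positivity, ?_⟩
  intro j k α hj hα hsum
  obtain ⟨n, rfl⟩ : ∃ n, j = n + 1 := ⟨j - 1, by omega⟩
  have hk : n + 1 ≤ k := by
    rw [← hsum]
    calc (n+1 : ℕ) = ∑ _i : Fin (n+1), 1 := by simp
    _ ≤ ∑ i, α i := Finset.sum_le_sum fun i _ => hα _
  have h1 := key n α hα
  rw [hsum] at h1
  have h2 := halc (n+1) (k - n) (by omega) (by omega)
  have heq : n + 1 + (k - n) - 1 = k := by omega
  rw [heq] at h2
  have hMn : M 1 ^ (n+1) ≤ (max (M 1) 1 ^ 2) ^ k := by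
    rw [← pow_mul]
    calc M 1 ^ (n+1) ≤ max (M 1) 1 ^ (n+1) :=
          pow_le_pow_left₀ (hpos 1).le (le_max_left _ _) _
    _ ≤ max (M 1) 1 ^ (2 * k) := pow_le_pow_right₀ (le_max_right _ _) (by omega)
  calc M (n+1) * ∏ i, M (α i)
      ≤ M (n+1) * (M 1 ^ n * M (k - n)) :=
        mul_le_mul_of_nonneg_left h1 (hpos _).le
    _ = M 1 ^ n * (M (n+1) * M (k - n)) := by ring
    _ ≤ M 1 ^ n * (M 1 * M k) :=
        mul_le_mul_of_nonneg_left h2 (pow_nonneg (hpos 1).le n)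
    _ = M 1 ^ (n+1) * M k := by ring
    _ ≤ (max (M 1) 1 ^ 2) ^ k * M k :=
        mul_le_mul_of_nonneg_right hMn (hpos k).le
end

section
/- Let L, M : ℕ → ℝ be positive sequences such that (L k / M k)^(1/k) → 0 and (M k)^(1/k) → ∞. Then there exist positive sequences N¹, N² with (Nⁱ k)^(1/k) → ∞ such that L k ≤ N¹ k for all k, (N¹ k / N² k)^(1/k) → 0, and (N² k / M k)^(1/k) → 0. -/
open Filter Topology

/-!
Take `N₁ = max (√M) L` and `N₂ = √(N₁ M)`, the geometric mean of `N₁` and `M`.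
Since `M k ^ (1/k) → ∞`, also `√M ◁ M`, so `N₁ ◁ M`; and because
`N₁ / N₂ = N₂ / M = √(N₁ / M)`, taking square roots of the `k`-th roots splits `N₁ ◁ M`
into `N₁ ◁ N₂ ◁ M`.
-/

def RootNegligible (A B : ℕ → ℝ) : Prop :=
  Tendsto (fun k : ℕ => (A k / B k) ^ ((1 : ℝ) / k)) atTop (𝓝 0)

infixl:50 " ◁ " => RootNegligible

namespace Real

theorem sqrt_rpow {x : ℝ} (hx : 0 ≤ x) (y : ℝ) : √x ^ y = √(x ^ y) := by
  rw [sqrt_eq_rpow, sqrt_eq_rpow, ← rpow_mul hx, mul_comm, rpow_mul hx]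

theorem div_sqrt_mul {a : ℝ} (ha : 0 ≤ a) (b : ℝ) : a / √(a * b) = √(a / b) := by
  rw [sqrt_mul ha, sqrt_div ha, div_mul_eq_div_div, div_sqrt]

theorem sqrt_mul_div (a : ℝ) {b : ℝ} (hb : 0 ≤ b) : √(a * b) / b = √(a / b) := by
  rw [sqrt_mul' a hb, mul_div_assoc, sqrt_div_self, sqrt_div' a hb, div_eq_mul_inv]

end Real

section KthRoot

variable {A B C : ℕ → ℝ}

theorem tendsto_rpow_one_div_nat_sqrt_atTop (hA : ∀ k, 0 ≤ A k)
    (h : Tendsto (fun k : ℕ => A k ^ ((1 : ℝ) / k)) atTop atTop) :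
    Tendsto (fun k : ℕ => √(A k) ^ ((1 : ℝ) / k)) atTop atTop := by
  simp only [Real.sqrt_rpow (hA _)]
  exact Real.tendsto_sqrt_atTop.comp h

theorem tendsto_rpow_one_div_nat_sqrt_zero (hA : ∀ k, 0 ≤ A k)
    (h : Tendsto (fun k : ℕ => A k ^ ((1 : ℝ) / k)) atTop (𝓝 0)) :
    Tendsto (fun k : ℕ => √(A k) ^ ((1 : ℝ) / k)) atTop (𝓝 0) := by
  simp only [Real.sqrt_rpow (hA _)]
  exact Real.sqrt_zero ▸ (Real.continuous_sqrt.tendsto 0).comp h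

theorem tendsto_rpow_one_div_nat_atTop_mono (hA : ∀ k, 0 ≤ A k) (hAB : ∀ k, A k ≤ B k)
    (h : Tendsto (fun k : ℕ => A k ^ ((1 : ℝ) / k)) atTop atTop) :
    Tendsto (fun k : ℕ => B k ^ ((1 : ℝ) / k)) atTop atTop :=
  tendsto_atTop_mono (fun k => Real.rpow_le_rpow (hA k) (hAB k) (by positivity)) h

theorem tendsto_rpow_one_div_nat_mul_atTop (hA : ∀ k, 0 ≤ A k) (hB : ∀ k, 0 ≤ B k)
    (hA' : Tendsto (fun k : ℕ => A k ^ ((1 : ℝ) / k)) atTop atTop)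
    (hB' : Tendsto (fun k : ℕ => B k ^ ((1 : ℝ) / k)) atTop atTop) :
    Tendsto (fun k : ℕ => (A k * B k) ^ ((1 : ℝ) / k)) atTop atTop := by
  simp only [Real.mul_rpow (hA _) (hB _)]
  exact hA'.atTop_mul_atTop₀ hB'

theorem rootNegligible_sqrt_self (hA : ∀ k, 0 ≤ A k)
    (h : Tendsto (fun k : ℕ => A k ^ ((1 : ℝ) / k)) atTop atTop) :
    (fun k => √(A k)) ◁ A := by
  unfold RootNegligible
  simp only [Real.sqrt_div_self, Real.inv_rpow (Real.sqrt_nonneg _)]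
  exact tendsto_inv_atTop_zero.comp (tendsto_rpow_one_div_nat_sqrt_atTop hA h)

namespace RootNegligible

theorem max (hA : ∀ k, 0 ≤ A k) (hB : ∀ k, 0 ≤ B k) (hC : ∀ k, 0 ≤ C k)
    (hAC : A ◁ C) (hBC : B ◁ C) : (fun k => max (A k) (B k)) ◁ C := by
  unfold RootNegligible
  simp only [← max_div_div_right (hC _),
    Real.rpow_max (div_nonneg (hA _) (hC _)) (div_nonneg (hB _) (hC _))
    (one_div_nonneg.2 (Nat.cast_nonneg _))]
  simpa using Tendsto.max hAC hBC

theorem left_sqrt_mul (hA : ∀ k, 0 ≤ A k) (hB : ∀ k, 0 ≤ B k) (h : A ◁ B) :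
    A ◁ fun k => √(A k * B k) := by
  unfold RootNegligible
  simp only [Real.div_sqrt_mul (hA _)]
  exact tendsto_rpow_one_div_nat_sqrt_zero (fun k => div_nonneg (hA k) (hB k)) h

theorem sqrt_mul_right (hA : ∀ k, 0 ≤ A k) (hB : ∀ k, 0 ≤ B k) (h : A ◁ B) :
    (fun k => √(A k * B k)) ◁ B := by
  unfold RootNegligible
  simp only [Real.sqrt_mul_div _ (hB _)]
  exact tendsto_rpow_one_div_nat_sqrt_zero (fun k => div_nonneg (hA k) (hB k)) h

end RootNegligible

end KthRoot

theorem interpolation_sequences (L M : ℕ → ℝ)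
    (hL : ∀ k, 0 < L k) (hM : ∀ k, 0 < M k)
    (hLM : Tendsto (fun k : ℕ => (L k / M k) ^ ((1 : ℝ) / k)) atTop (nhds 0))
    (hMinf : Tendsto (fun k : ℕ => (M k) ^ ((1 : ℝ) / k)) atTop atTop) :
    ∃ N₁ N₂ : ℕ → ℝ, (∀ k, 0 < N₁ k) ∧ (∀ k, 0 < N₂ k) ∧
      Tendsto (fun k : ℕ => (N₁ k) ^ ((1 : ℝ) / k)) atTop atTop ∧
      Tendsto (fun k : ℕ => (N₂ k) ^ ((1 : ℝ) / k)) atTop atTop ∧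
      (∀ k, L k ≤ N₁ k) ∧
      Tendsto (fun k : ℕ => (N₁ k / N₂ k) ^ ((1 : ℝ) / k)) atTop (nhds 0) ∧
      Tendsto (fun k : ℕ => (N₂ k / M k) ^ ((1 : ℝ) / k)) atTop (nhds 0) := by
  set N₁ : ℕ → ℝ := fun k => max √(M k) (L k)
  have hM₀ k : 0 ≤ M k := (hM k).le
  have hN₁ k : 0 < N₁ k := lt_max_of_lt_right (hL k)
  have hN₁M : N₁ ◁ M :=
    RootNegligible.max (fun _ => Real.sqrt_nonneg _) (fun k => (hL k).le) hM₀
      (rootNegligible_sqrt_self hM₀ hMinf) hLM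
  have hN₁inf : Tendsto (fun k : ℕ => N₁ k ^ ((1 : ℝ) / k)) atTop atTop :=
    tendsto_rpow_one_div_nat_atTop_mono (fun _ => Real.sqrt_nonneg _) (fun _ => le_max_left _ _)
      (tendsto_rpow_one_div_nat_sqrt_atTop hM₀ hMinf)
  refine ⟨N₁, fun k => √(N₁ k * M k), hN₁, fun k => Real.sqrt_pos.2 (mul_pos (hN₁ k) (hM k)),
    hN₁inf, ?_, fun k => le_max_right _ _, hN₁M.left_sqrt_mul (fun k => (hN₁ k).le) hM₀,
    hN₁M.sqrt_mul_right (fun k => (hN₁ k).le) hM₀⟩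
  exact tendsto_rpow_one_div_nat_sqrt_atTop (fun k => (mul_pos (hN₁ k) (hM k)).le)
    (tendsto_rpow_one_div_nat_mul_atTop (fun k => (hN₁ k).le) hM₀ hN₁inf hMinf)
end

section
/- For positive sequences M, N : ℕ → ℝ, the condition (∀ ρ > 0, ∃ C > 0, ∀ k, M k ≤ C * ρ^k * N k) holds if and only if (M k / N k)^(1/k) → 0 as k → ∞. -/
open Filter

private lemma pow_rpow_inv_nat (x : ℝ) (hx : 0 ≤ x) {k : ℕ} (hk : k ≠ 0) :
    (x ^ k) ^ ((1 : ℝ) / k) = x := by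
  rw [← Real.rpow_natCast x k, ← Real.rpow_mul hx]
  rw [mul_one_div, div_self (by exact_mod_cast hk), Real.rpow_one]

private lemma rpow_inv_nat_pow (x : ℝ) (hx : 0 ≤ x) {k : ℕ} (hk : k ≠ 0) :
    (x ^ ((1 : ℝ) / k)) ^ k = x := by
  rw [← Real.rpow_natCast (x ^ ((1:ℝ)/k)) k, ← Real.rpow_mul hx]
  rw [one_div_mul_cancel (by exact_mod_cast hk), Real.rpow_one]

theorem triangleleft_iff_tendsto_zero (M N : ℕ → ℝ)
    (hM : ∀ k, 0 < M k) (hN : ∀ k, 0 < N k) :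
    (∀ ρ : ℝ, 0 < ρ → ∃ C : ℝ, 0 < C ∧ ∀ k, M k ≤ C * ρ ^ k * N k) ↔
    Tendsto (fun k : ℕ => (M k / N k) ^ ((1 : ℝ) / k)) atTop (nhds 0) := by
  constructor
  · intro h
    rw [Metric.tendsto_atTop]
    intro ε hε
    obtain ⟨C, hC, hle⟩ := h (ε/2) (by linarith)
    have h1 : Tendsto (fun k : ℕ => C ^ ((1:ℝ)/k)) atTop (nhds 1) := by
      have h0 : Tendsto (fun k : ℕ => Real.log C * (1/k)) atTop (nhds 0) := by
        simpa using (tendsto_one_div_atTop_nhds_zero_nat.const_mul (Real.log C))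
      have h2 := (Real.continuous_exp.tendsto 0).comp h0
      rw [Real.exp_zero] at h2
      have heq : (fun k : ℕ => C ^ ((1:ℝ)/k)) = fun k : ℕ => Real.exp (Real.log C * (1/k)) := by
        funext k; rw [Real.rpow_def_of_pos hC]
      rw [heq]; exact h2
    obtain ⟨K, hK⟩ := eventually_atTop.mp
      (h1.eventually (eventually_lt_nhds (by norm_num : (1:ℝ) < 2)))
    refine ⟨max K 1, fun n hn => ?_⟩
    have hn1 : 1 ≤ n := le_trans (le_max_right K 1) hn
    have hnK : K ≤ n := le_trans (le_max_left K 1) hn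
    have hn0 : n ≠ 0 := by omega
    have hq : 0 ≤ M n / N n := le_of_lt (div_pos (hM n) (hN n))
    have hbound : M n / N n ≤ C * (ε/2)^n := by
      rw [div_le_iff₀ (hN n)]
      calc M n ≤ C * (ε/2)^n * N n := hle n
        _ = C * (ε/2)^n * N n := rfl
    have ha : (M n / N n) ^ ((1:ℝ)/n) ≤ (C * (ε/2)^n) ^ ((1:ℝ)/n) :=
      Real.rpow_le_rpow hq hbound (by positivity)
    have heq : (C * (ε/2)^n) ^ ((1:ℝ)/n) = C ^ ((1:ℝ)/n) * (ε/2) := by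
      rw [Real.mul_rpow (le_of_lt hC) (by positivity),
        pow_rpow_inv_nat (ε/2) (by linarith) hn0]
    rw [Real.dist_eq, sub_zero, abs_of_nonneg (Real.rpow_nonneg hq _)]
    calc (M n / N n) ^ ((1:ℝ)/n) ≤ C ^ ((1:ℝ)/n) * (ε/2) := by rw [← heq]; exact ha
      _ < 2 * (ε/2) := by
          have := hK n hnK
          have : C ^ ((1:ℝ)/n) < 2 := this
          nlinarith
      _ = ε := by ring
  · intro h ρ hρ
    obtain ⟨K, hK⟩ := eventually_atTop.mp (h.eventually (eventually_lt_nhds hρ))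
    set K' := max K 1 with hK'
    have hsum : 0 ≤ ∑ i ∈ Finset.range K', M i / (ρ^i * N i) :=
      Finset.sum_nonneg fun i _ => le_of_lt (div_pos (hM i) (mul_pos (pow_pos hρ i) (hN i)))
    refine ⟨1 + ∑ i ∈ Finset.range K', M i / (ρ^i * N i), by linarith, fun k => ?_⟩
    by_cases hk : K' ≤ k
    · have hk0 : k ≠ 0 := by have := le_trans (le_max_right K 1) hk; omega
      have hkK : K ≤ k := le_trans (le_max_left K 1) hk
      have ha := hK k hkK
      have hq : 0 ≤ M k / N k := le_of_lt (div_pos (hM k) (hN k))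
      have : M k / N k ≤ ρ ^ k := by
        have := pow_le_pow_left₀ (Real.rpow_nonneg hq _) (le_of_lt ha) k
        rwa [rpow_inv_nat_pow _ hq hk0] at this
      have h2 : M k ≤ ρ ^ k * N k := (div_le_iff₀ (hN k)).mp this
      have hCge : (1:ℝ) ≤ 1 + ∑ i ∈ Finset.range K', M i / (ρ^i * N i) := by
        have : 0 ≤ ∑ i ∈ Finset.range K', M i / (ρ^i * N i) :=
          Finset.sum_nonneg fun i _ => le_of_lt (div_pos (hM i) (mul_pos (pow_pos hρ i) (hN i)))
        linarith
      calc M k ≤ ρ ^ k * N k := h2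
        _ = 1 * ρ ^ k * N k := by ring
        _ ≤ (1 + ∑ i ∈ Finset.range K', M i / (ρ^i * N i)) * ρ ^ k * N k := by
            apply mul_le_mul_of_nonneg_right (mul_le_mul_of_nonneg_right hCge (by positivity))
              (le_of_lt (hN k))
    · push_neg at hk
      have hmem : k ∈ Finset.range K' := Finset.mem_range.mpr hk
      have hterm : M k / (ρ^k * N k) ≤ ∑ i ∈ Finset.range K', M i / (ρ^i * N i) :=
        Finset.single_le_sum (f := fun i => M i / (ρ^i * N i)) (fun i _ => le_of_lt (div_pos (hM i) (mul_pos (pow_pos hρ i) (hN i)))) hmem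
      have hCge : M k / (ρ^k * N k) ≤ 1 + ∑ i ∈ Finset.range K', M i / (ρ^i * N i) := by
        linarith
      have := (div_le_iff₀ (mul_pos (pow_pos hρ k) (hN k))).mp hCge
      linarith [this]
end

section
/- Let M : ℕ → ℝ be positive such that (M k)^(1/k) is monotone increasing. If (M k)^(1/k) → ∞ then M (k+1) / M k → ∞. -/
open Filter

/-- If `a ^ (1/k) ≤ x := b ^ (1/(k+1))`, then `a ≤ x ^ k` while `b = x ^ (k+1)`. -/
lemma rpow_one_div_succ_le_div {a b : ℝ} {k : ℕ} (ha : 0 < a) (hb : 0 ≤ b) (hk : k ≠ 0)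
    (h : a ^ ((1 : ℝ) / k) ≤ b ^ ((1 : ℝ) / (k + 1 : ℕ))) :
    b ^ ((1 : ℝ) / (k + 1 : ℕ)) ≤ b / a := by
  set x := b ^ ((1 : ℝ) / (k + 1 : ℕ))
  have hx : 0 ≤ x := Real.rpow_nonneg hb _
  have ha_le : a ≤ x ^ k := by
    rwa [one_div, Real.rpow_inv_le_iff_of_pos ha.le hx (by positivity), Real.rpow_natCast] at h
  have hb_eq : b = x ^ (k + 1) := by
    rw [← Real.rpow_inv_natCast_pow hb k.succ_ne_zero, ← one_div]
  rw [le_div_iff₀ ha]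
  calc x * a ≤ x * x ^ k := mul_le_mul_of_nonneg_left ha_le hx
    _ = b := by rw [hb_eq, pow_succ']

theorem roots_to_infty_implies_quotients (M : ℕ → ℝ)
    (hM : ∀ k, 0 < M k)
    (hmono : ∀ j k : ℕ, 1 ≤ j → j ≤ k →
      (M j) ^ ((1 : ℝ) / j) ≤ (M k) ^ ((1 : ℝ) / k))
    (hinf : Tendsto (fun k : ℕ => (M k) ^ ((1 : ℝ) / k)) atTop atTop) :
    Tendsto (fun k : ℕ => M (k + 1) / M k) atTop atTop := by
  refine tendsto_atTop_mono' atTop ?_ (hinf.comp (tendsto_add_atTop_nat 1))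
  filter_upwards [eventually_ge_atTop 1] with k hk
  exact rpow_one_div_succ_le_div (hM k) (hM (k + 1)).le (by omega)
    (hmono k (k + 1) hk k.le_succ)
end

section
/- Let ω be a weight function satisfying ∃ H ≥ 1 ∀ t ≥ 0: 2ω(t) ≤ ω(Ht) + H (condition (ω₆)). Define Ωρ k := (1/k!) exp((1/ρ) φ*(ρ k)) with φ* the Young conjugate of φ(t) = ω(e^t). Then for each ρ > 0 there exists C > 0 with Ω^{2ρ} k ≤ C H^k Ωρ k for all k; in particular Ω^{2ρ} ≼ Ωρ and hence Ωρ ≈ Ωτ for all ρ, τ > 0. -/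
/-!
Write `φ(s) = ω(eˢ)` and `L = log H`. Condition (ω₆) reads `2φ(s) ≤ φ(s + L) + H`, and
splitting `s · 2t − φ(s)` at `s = L` turns it into the doubling inequality
`φ*(2t) ≤ 2φ*(t) + 2tL + H`. Dividing by `2ρ` at `t = ρk` gives `Ω^{2ρ}_k ≤ e^{H/(2ρ)} Hᵏ Ω^ρ_k`.
Since `φ ≥ 0`, the function `ρ ↦ φ*(ρk)/ρ` is nondecreasing, so `Ω^ρ` increases with `ρ`;
iterating the doubling then compares `Ω^ρ` with `Ω^{2ⁿτ}` and hence with `Ω^τ`. The one analytic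
point is that `φ*` is finite: convexity and `φ(0) = 0` give `φ` linear growth, which the doubling
inequality propagates to every slope.
-/
open Filter

/-- The Young conjugate `φ*(t) = sup_{s ≥ 0} (s t − φ(s))`. -/
noncomputable def youngStar (φ : ℝ → ℝ) (t : ℝ) : ℝ :=
  ⨆ s : {s : ℝ // 0 ≤ s}, ((s : ℝ) * t - φ s)

/-- The associated weight sequence `Ω^ρ_k = (1/k!) exp((1/ρ) φ*(ρ k))`. -/
noncomputable def assocSeq (ω : ℝ → ℝ) (ρ : ℝ) (k : ℕ) : ℝ :=
  (1 / k.factorial) *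
    Real.exp ((1 / ρ) * youngStar (fun s => ω (Real.exp s)) (ρ * k))

def YoungSupBdd (φ : ℝ → ℝ) (t : ℝ) : Prop :=
  BddAbove (Set.range fun s : {s : ℝ // 0 ≤ s} => (s : ℝ) * t - φ s)

section YoungStar

variable {φ : ℝ → ℝ} {t B : ℝ}

lemma YoungSupBdd.of_le (h : ∀ s, 0 ≤ s → s * t - φ s ≤ B) : YoungSupBdd φ t :=
  ⟨B, by rintro _ ⟨s, rfl⟩; exact h s s.2⟩

lemma YoungSupBdd.le_youngStar (h : YoungSupBdd φ t) {s : ℝ} (hs : 0 ≤ s) :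
    s * t - φ s ≤ youngStar φ t :=
  le_ciSup h ⟨s, hs⟩

lemma youngStar_le (h : ∀ s, 0 ≤ s → s * t - φ s ≤ B) : youngStar φ t ≤ B :=
  ciSup_le fun s => h s s.2

lemma YoungSupBdd.mono {t' : ℝ} (h : YoungSupBdd φ t') (ht : t ≤ t') : YoungSupBdd φ t := by
  obtain ⟨B, hB⟩ := h
  refine .of_le (B := B) fun s hs => ?_
  have := hB ⟨⟨s, hs⟩, rfl⟩
  nlinarith

lemma youngStar_nonneg (hφ : φ 0 = 0) (h : YoungSupBdd φ t) : 0 ≤ youngStar φ t := by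
  simpa [hφ] using h.le_youngStar le_rfl

lemma youngStar_mul_le (hφ : ∀ s, 0 ≤ s → 0 ≤ φ s) (h : YoungSupBdd φ t) {a : ℝ}
    (ha₀ : 0 ≤ a) (ha₁ : a ≤ 1) : youngStar φ (a * t) ≤ a * youngStar φ t := by
  refine youngStar_le fun s hs => ?_
  have hφs := hφ s hs
  calc s * (a * t) - φ s ≤ a * (s * t - φ s) := by nlinarith
    _ ≤ a * youngStar φ t := by gcongr; exact h.le_youngStar hs

lemma youngSupBdd_of_convexOn (hconv : ConvexOn ℝ (Set.Ici 0) φ)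
    (hφ : ∀ s, 0 ≤ s → 0 ≤ φ s) (hφ₀ : φ 0 = 0) {s₁ : ℝ} (hs₁ : 0 < s₁) :
    YoungSupBdd φ (φ s₁ / s₁) := by
  refine .of_le (B := φ s₁) fun s hs => ?_
  rcases le_or_gt s₁ s with hs₁s | hss₁
  · have hslope : φ s₁ / s₁ ≤ φ s / s := by
      simpa [hφ₀] using
        hconv.secant_mono Set.self_mem_Ici hs₁.le hs hs₁.ne' (by linarith) hs₁s
    have := (le_div_iff₀ (by linarith)).1 hslope
    nlinarith [hφ s₁ hs₁.le]
  · have : s * (φ s₁ / s₁) ≤ s₁ * (φ s₁ / s₁) := by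
      gcongr
      exact div_nonneg (hφ s₁ hs₁.le) hs₁.le
    rw [mul_div_cancel₀ _ hs₁.ne'] at this
    linarith [hφ s hs]

section Doubling

variable {L H : ℝ} (hφ : ∀ s, 0 ≤ s → 0 ≤ φ s)
  (hφ₆ : ∀ s, 0 ≤ s → 2 * φ s ≤ φ (s + L) + H)
include hφ hφ₆

lemma sub_le_of_doubling (hH : 0 ≤ H) (ht : 0 ≤ t) (hB₀ : 0 ≤ B)
    (hB : ∀ s, 0 ≤ s → s * t - φ s ≤ B) (s : ℝ) (hs : 0 ≤ s) :
    s * (2 * t) - φ s ≤ 2 * B + 2 * t * L + H := by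
  rcases le_or_gt L s with hLs | hsL
  · have h₆ := hφ₆ (s - L) (by linarith)
    have hB' := hB (s - L) (by linarith)
    rw [sub_add_cancel] at h₆
    nlinarith
  · nlinarith [hφ s hs]

lemma YoungSupBdd.two_mul (hH : 0 ≤ H) (ht : 0 ≤ t) (h : YoungSupBdd φ t) :
    YoungSupBdd φ (2 * t) := by
  obtain ⟨B, hB⟩ := h
  exact .of_le <| sub_le_of_doubling hφ hφ₆ hH ht (le_max_right B 0)
    fun s hs => (hB ⟨⟨s, hs⟩, rfl⟩).trans (le_max_left B 0)

lemma youngStar_two_mul_le (hφ₀ : φ 0 = 0) (hH : 0 ≤ H) (ht : 0 ≤ t)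
    (h : YoungSupBdd φ t) :
    youngStar φ (2 * t) ≤ 2 * youngStar φ t + 2 * t * L + H :=
  youngStar_le <| sub_le_of_doubling hφ hφ₆ hH ht (youngStar_nonneg hφ₀ h)
    fun _ hs => h.le_youngStar hs

lemma youngSupBdd_of_pos {t₀ : ℝ} (hH : 0 ≤ H) (ht₀ : 0 < t₀) (h₀ : YoungSupBdd φ t₀)
    (t : ℝ) : YoungSupBdd φ t := by
  have hpow : ∀ n : ℕ, YoungSupBdd φ (2 ^ n * t₀) := by
    intro n
    induction n with
    | zero => simpa using h₀
    | succ n ih =>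
      rw [pow_succ', mul_assoc]
      exact ih.two_mul hφ hφ₆ hH (by positivity)
  obtain ⟨n, hn⟩ := pow_unbounded_of_one_lt (t / t₀) one_lt_two
  exact (hpow n).mono ((div_lt_iff₀ ht₀).1 hn).le

end Doubling

end YoungStar

section AssocSeq

variable {ω : ℝ → ℝ} {H : ℝ}

lemma assocSeq_two_mul_le (hH : 0 < H)
    (hdouble : ∀ t, 0 ≤ t → youngStar (fun s => ω (Real.exp s)) (2 * t) ≤
      2 * youngStar (fun s => ω (Real.exp s)) t + 2 * t * Real.log H + H)
    {ρ : ℝ} (hρ : 0 < ρ) (k : ℕ) :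
    assocSeq ω (2 * ρ) k ≤ Real.exp (H / (2 * ρ)) * H ^ k * assocSeq ω ρ k := by
  set Y := youngStar (fun s => ω (Real.exp s)) (ρ * k)
  have hexponent : 1 / (2 * ρ) * youngStar (fun s => ω (Real.exp s)) (2 * (ρ * k)) ≤
      H / (2 * ρ) + k * Real.log H + 1 / ρ * Y :=
    calc _ ≤ 1 / (2 * ρ) * (2 * Y + 2 * (ρ * k) * Real.log H + H) := by
          gcongr; exact hdouble _ (by positivity)
      _ = H / (2 * ρ) + k * Real.log H + 1 / ρ * Y := by field_simp; ring
  calc assocSeq ω (2 * ρ) k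
      = 1 / k.factorial *
          Real.exp (1 / (2 * ρ) * youngStar (fun s => ω (Real.exp s)) (2 * (ρ * k))) := by
        rw [assocSeq, mul_assoc]
    _ ≤ 1 / k.factorial * Real.exp (H / (2 * ρ) + k * Real.log H + 1 / ρ * Y) := by
        gcongr
    _ = Real.exp (H / (2 * ρ)) * H ^ k * assocSeq ω ρ k := by
        rw [assocSeq, Real.exp_add, Real.exp_add, Real.exp_nat_mul, Real.exp_log hH]
        ring

lemma assocSeq_le_of_le
    (hmul : ∀ t a, 0 ≤ a → a ≤ 1 → youngStar (fun s => ω (Real.exp s)) (a * t) ≤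
      a * youngStar (fun s => ω (Real.exp s)) t)
    {ρ τ : ℝ} (hρ : 0 < ρ) (hρτ : ρ ≤ τ) (k : ℕ) : assocSeq ω ρ k ≤ assocSeq ω τ k := by
  have hτ : 0 < τ := hρ.trans_le hρτ
  have hstar := hmul (τ * k) (ρ / τ) (by positivity) ((div_le_one hτ).2 hρτ)
  rw [div_mul_eq_mul_div, mul_left_comm, mul_div_cancel_left₀ _ hτ.ne'] at hstar
  unfold assocSeq
  gcongr _ * Real.exp ?_
  calc 1 / ρ * youngStar (fun s => ω (Real.exp s)) (ρ * k)
      ≤ 1 / ρ * (ρ / τ * youngStar (fun s => ω (Real.exp s)) (τ * k)) := by gcongr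
    _ = 1 / τ * youngStar (fun s => ω (Real.exp s)) (τ * k) := by field_simp

section Comparison

variable (hH : 0 < H)
  (hdouble : ∀ t, 0 ≤ t → youngStar (fun s => ω (Real.exp s)) (2 * t) ≤
    2 * youngStar (fun s => ω (Real.exp s)) t + 2 * t * Real.log H + H)
include hH hdouble

lemma assocSeq_two_pow_mul_le {ρ : ℝ} (hρ : 0 < ρ) (n : ℕ) :
    ∃ C : ℝ, 0 < C ∧
      ∀ k : ℕ, assocSeq ω (2 ^ n * ρ) k ≤ C * (H ^ n) ^ k * assocSeq ω ρ k := by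
  induction n with
  | zero => exact ⟨1, one_pos, fun k => by simp⟩
  | succ n ih =>
    obtain ⟨C, hC, hle⟩ := ih
    have hρn : 0 < 2 ^ n * ρ := by positivity
    refine ⟨Real.exp (H / (2 * (2 ^ n * ρ))) * C, by positivity, fun k => ?_⟩
    calc assocSeq ω (2 ^ (n + 1) * ρ) k
        = assocSeq ω (2 * (2 ^ n * ρ)) k := by rw [pow_succ', mul_assoc]
      _ ≤ Real.exp (H / (2 * (2 ^ n * ρ))) * H ^ k * assocSeq ω (2 ^ n * ρ) k :=
          assocSeq_two_mul_le hH hdouble hρn k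
      _ ≤ Real.exp (H / (2 * (2 ^ n * ρ))) * H ^ k *
            (C * (H ^ n) ^ k * assocSeq ω ρ k) := by
          gcongr; exact hle k
      _ = Real.exp (H / (2 * (2 ^ n * ρ))) * C * (H ^ (n + 1)) ^ k * assocSeq ω ρ k := by
          rw [pow_succ, mul_pow]; ring

lemma assocSeq_le_const_mul_pow
    (hmul : ∀ t a, 0 ≤ a → a ≤ 1 → youngStar (fun s => ω (Real.exp s)) (a * t) ≤
      a * youngStar (fun s => ω (Real.exp s)) t)
    {ρ τ : ℝ} (hρ : 0 < ρ) (hτ : 0 < τ) :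
    ∃ C ρ₀ : ℝ, 0 < C ∧ 0 < ρ₀ ∧ ∀ k, assocSeq ω ρ k ≤ C * ρ₀ ^ k * assocSeq ω τ k := by
  obtain ⟨n, hn⟩ := pow_unbounded_of_one_lt (ρ / τ) one_lt_two
  obtain ⟨C, hC, hle⟩ := assocSeq_two_pow_mul_le hH hdouble hτ n
  refine ⟨C, H ^ n, hC, by positivity, fun k => ?_⟩
  calc assocSeq ω ρ k ≤ assocSeq ω (2 ^ n * τ) k :=
        assocSeq_le_of_le hmul hρ ((div_lt_iff₀ hτ).1 hn).le k
    _ ≤ C * (H ^ n) ^ k * assocSeq ω τ k := hle k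

end Comparison

end AssocSeq

theorem omega6_assocSeq_equiv_general (ω : ℝ → ℝ)
    (hnonneg : ∀ t, 0 ≤ t → 0 ≤ ω t)
    (hzero : ∀ t ∈ Set.Icc (0 : ℝ) 1, ω t = 0)
    (hlim : Tendsto ω atTop atTop)
    (hconv : ConvexOn ℝ (Set.Ici (0 : ℝ)) (fun t => ω (Real.exp t)))
    (H : ℝ) (hH : 1 ≤ H)
    (hω6 : ∀ t, 0 ≤ t → 2 * ω t ≤ ω (H * t) + H) :
    (∀ ρ : ℝ, 0 < ρ → ∃ C : ℝ, 0 < C ∧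
      ∀ k : ℕ, assocSeq ω (2 * ρ) k ≤ C * H ^ k * assocSeq ω ρ k) ∧
    (∀ ρ τ : ℝ, 0 < ρ → 0 < τ →
      (∃ C ρ₀ : ℝ, 0 < C ∧ 0 < ρ₀ ∧
        ∀ k, assocSeq ω ρ k ≤ C * ρ₀ ^ k * assocSeq ω τ k) ∧
      (∃ C ρ₀ : ℝ, 0 < C ∧ 0 < ρ₀ ∧
        ∀ k, assocSeq ω τ k ≤ C * ρ₀ ^ k * assocSeq ω ρ k)) := by
  set φ : ℝ → ℝ := fun s => ω (Real.exp s)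
  have hH₀ : 0 < H := one_pos.trans_le hH
  have hφ : ∀ s, 0 ≤ s → 0 ≤ φ s := fun s _ => hnonneg _ (Real.exp_pos s).le
  have hφ₀ : φ 0 = 0 := by simpa [φ] using hzero 1 ⟨zero_le_one, le_rfl⟩
  have hφ₆ : ∀ s, 0 ≤ s → 2 * φ s ≤ φ (s + Real.log H) + H := fun s _ => by
    simpa [φ, Real.exp_add, Real.exp_log hH₀, mul_comm] using hω6 _ (Real.exp_pos s).le
  have hφlim : Tendsto φ atTop atTop := hlim.comp Real.tendsto_exp_atTop
  obtain ⟨s₁, hφs₁, hs₁⟩ := ((hφlim.eventually_gt_atTop 0).and (eventually_gt_atTop 0)).exists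
  have hbdd : ∀ t, YoungSupBdd φ t := youngSupBdd_of_pos hφ hφ₆ hH₀.le (div_pos hφs₁ hs₁)
    (youngSupBdd_of_convexOn hconv hφ hφ₀ hs₁)
  have hdouble := fun t ht => youngStar_two_mul_le hφ hφ₆ hφ₀ hH₀.le ht (hbdd t)
  have hmul := fun t a ha₀ ha₁ => youngStar_mul_le hφ (hbdd t) (a := a) ha₀ ha₁
  exact ⟨fun ρ hρ => ⟨_, Real.exp_pos _, assocSeq_two_mul_le hH₀ hdouble hρ⟩,
    fun ρ τ hρ hτ => ⟨assocSeq_le_const_mul_pow hH₀ hdouble hmul hρ hτ,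
      assocSeq_le_const_mul_pow hH₀ hdouble hmul hτ hρ⟩⟩

theorem omega6_assocSeq_equiv (ω : ℝ → ℝ)
    (hcont : ContinuousOn ω (Set.Ici (0 : ℝ)))
    (hmono : MonotoneOn ω (Set.Ici (0 : ℝ)))
    (hnonneg : ∀ t, 0 ≤ t → 0 ≤ ω t)
    (hzero : ∀ t ∈ Set.Icc (0 : ℝ) 1, ω t = 0)
    (hlim : Tendsto ω atTop atTop)
    (hconv : ConvexOn ℝ (Set.Ici (0 : ℝ)) (fun t => ω (Real.exp t)))
    (H : ℝ) (hH : 1 ≤ H)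
    (hω6 : ∀ t, 0 ≤ t → 2 * ω t ≤ ω (H * t) + H) :
    (∀ ρ : ℝ, 0 < ρ → ∃ C : ℝ, 0 < C ∧
      ∀ k : ℕ, assocSeq ω (2 * ρ) k ≤ C * H ^ k * assocSeq ω ρ k) ∧
    (∀ ρ τ : ℝ, 0 < ρ → 0 < τ →
      (∃ C ρ₀ : ℝ, 0 < C ∧ 0 < ρ₀ ∧
        ∀ k, assocSeq ω ρ k ≤ C * ρ₀ ^ k * assocSeq ω τ k) ∧
      (∃ C ρ₀ : ℝ, 0 < C ∧ 0 < ρ₀ ∧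
        ∀ k, assocSeq ω τ k ≤ C * ρ₀ ^ k * assocSeq ω ρ k)) :=
  omega6_assocSeq_equiv_general ω hnonneg hzero hlim hconv H hH hω6
end

section
/- Let M : ℕ → ℝ be positive and weakly log-convex (k! M k is log-convex) with (k! M k)^{1/k} → ∞. Suppose N : ℕ → ℝ is positive with the property that for all p, j ≥ 1: C₂ (M (p j))^{1/(pj)} ≥ (N p)^{1/p} for some constant C₂, and suppose (k! M k)^{1/k} is non-decreasing. Then there is a constant C₃ such that (N p)^{1/p} ≤ C₃ (M k)^{1/k} for all p ≤ k. -/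
/-!
Write `m = p ⌊k / p⌋`, so that `m ≤ k ≤ 2m`. The hypothesis with `j = ⌊k / p⌋` bounds
`(N p)^{1/p}` by `C₂ (M m)^{1/m}`, and monotonicity of `(n! M n)^{1/n}` gives
`(M m)^{1/m} ≤ ((k!)^{1/k} / (m!)^{1/m}) (M k)^{1/k}`. The factorial ratio is at most `2e`,
since `n / e ≤ (n!)^{1/n} ≤ n` and `k ≤ 2m`.
-/

open Filter Real
open scoped Nat

lemma Nat.le_two_mul_mul_div {p k : ℕ} (hp : 0 < p) (hpk : p ≤ k) : k ≤ 2 * (p * (k / p)) := by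
  have hrem : k % p < p := Nat.mod_lt k hp
  have hquot : p ≤ p * (k / p) := Nat.le_mul_of_pos_right p (Nat.div_pos hpk hp)
  have hdecomp := Nat.div_add_mod k p
  omega

lemma factorial_rpow_one_div_le_self {n : ℕ} (hn : n ≠ 0) : (n ! : ℝ) ^ (1 / n : ℝ) ≤ n := by
  rw [one_div, rpow_inv_le_iff_of_pos (by positivity) (by positivity) (by positivity),
    rpow_natCast]
  exact_mod_cast Nat.factorial_le_pow n

lemma div_exp_one_pow_le_factorial (n : ℕ) : ((n : ℝ) / exp 1) ^ n ≤ n ! := by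
  have h := pow_div_factorial_le_exp (x := (n : ℝ)) (by positivity) n
  rw [div_le_iff₀ (by positivity)] at h
  rw [div_pow, exp_one_pow, div_le_iff₀ (exp_pos _), mul_comm]
  exact h

lemma self_le_exp_one_mul_factorial_rpow_one_div {n : ℕ} (hn : n ≠ 0) :
    (n : ℝ) ≤ exp 1 * (n ! : ℝ) ^ (1 / n : ℝ) := by
  rw [← div_le_iff₀' (exp_pos 1), one_div,
    le_rpow_inv_iff_of_pos (by positivity) (by positivity) (by positivity), rpow_natCast]
  exact div_exp_one_pow_le_factorial n

lemma factorial_rpow_one_div_le_of_le_two_mul {m k : ℕ} (hk : k ≠ 0) (hkm : k ≤ 2 * m) :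
    (k ! : ℝ) ^ (1 / k : ℝ) ≤ 2 * exp 1 * (m ! : ℝ) ^ (1 / m : ℝ) := by
  have hm : m ≠ 0 := by omega
  calc (k ! : ℝ) ^ (1 / k : ℝ) ≤ k := factorial_rpow_one_div_le_self hk
    _ ≤ 2 * m := by exact_mod_cast hkm
    _ ≤ 2 * (exp 1 * (m ! : ℝ) ^ (1 / m : ℝ)) := by
      gcongr
      exact self_le_exp_one_mul_factorial_rpow_one_div hm
    _ = 2 * exp 1 * (m ! : ℝ) ^ (1 / m : ℝ) := by ring

lemma rpow_one_div_le_of_factorial_mul_rpow_one_div_le {m k : ℕ} {a b : ℝ} (ha : 0 ≤ a)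
    (hb : 0 ≤ b) (hk : k ≠ 0) (hkm : k ≤ 2 * m)
    (h : ((m ! : ℝ) * a) ^ (1 / m : ℝ) ≤ ((k ! : ℝ) * b) ^ (1 / k : ℝ)) :
    a ^ (1 / m : ℝ) ≤ 2 * exp 1 * b ^ (1 / k : ℝ) := by
  rw [mul_rpow (by positivity) ha, mul_rpow (by positivity) hb] at h
  have hfact := factorial_rpow_one_div_le_of_le_two_mul hk hkm
  have hpos : 0 < (m ! : ℝ) ^ (1 / m : ℝ) := by positivity
  refine le_of_mul_le_mul_left ?_ hpos
  calc (m ! : ℝ) ^ (1 / m : ℝ) * a ^ (1 / m : ℝ) ≤ (k ! : ℝ) ^ (1 / k : ℝ) * b ^ (1 / k : ℝ) := h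
    _ ≤ 2 * exp 1 * (m ! : ℝ) ^ (1 / m : ℝ) * b ^ (1 / k : ℝ) := by gcongr
    _ = (m ! : ℝ) ^ (1 / m : ℝ) * (2 * exp 1 * b ^ (1 / k : ℝ)) := by ring

theorem interpolate_root_estimate_general (M N : ℕ → ℝ) (C₂ : ℝ)
    (hM : ∀ k, 0 < M k) (hC₂ : 0 < C₂)
    (hmono : ∀ j k : ℕ, 1 ≤ j → j ≤ k →
      ((j.factorial : ℝ) * M j) ^ ((1 : ℝ) / j) ≤
        ((k.factorial : ℝ) * M k) ^ ((1 : ℝ) / k))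
    (hest : ∀ p j : ℕ, 1 ≤ p → 1 ≤ j →
      (N p) ^ ((1 : ℝ) / p) ≤ C₂ * (M (p * j)) ^ ((1 : ℝ) / (p * j : ℕ))) :
    ∃ C₃ : ℝ, 0 < C₃ ∧ ∀ p k : ℕ, 1 ≤ p → p ≤ k →
      (N p) ^ ((1 : ℝ) / p) ≤ C₃ * (M k) ^ ((1 : ℝ) / k) := by
  refine ⟨C₂ * (2 * exp 1), by positivity, fun p k hp hpk => ?_⟩
  have hj : 1 ≤ k / p := Nat.div_pos hpk hp
  have hm : 1 ≤ p * (k / p) := Nat.mul_pos hp hj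
  have hmk : p * (k / p) ≤ k := Nat.mul_div_le k p
  have hkm : k ≤ 2 * (p * (k / p)) := Nat.le_two_mul_mul_div hp hpk
  calc (N p) ^ ((1 : ℝ) / p) ≤ C₂ * (M (p * (k / p))) ^ ((1 : ℝ) / (p * (k / p) : ℕ)) :=
        hest p _ hp hj
    _ ≤ C₂ * (2 * exp 1 * (M k) ^ ((1 : ℝ) / k)) := by
        gcongr
        exact rpow_one_div_le_of_factorial_mul_rpow_one_div_le (hM _).le (hM k).le (by omega)
          hkm (hmono _ k hm hmk)
    _ = C₂ * (2 * exp 1) * (M k) ^ ((1 : ℝ) / k) := by ring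

theorem interpolate_root_estimate (M N : ℕ → ℝ) (C₂ : ℝ)
    (hM : ∀ k, 0 < M k) (hN : ∀ k, 0 < N k) (hC₂ : 0 < C₂)
    (hwlc : ∀ k, 1 ≤ k →
      ((k.factorial : ℝ) * M k) ^ 2 ≤
        ((k - 1).factorial : ℝ) * M (k - 1) * (((k + 1).factorial : ℝ) * M (k + 1)))
    (hinf : Tendsto (fun k : ℕ => ((k.factorial : ℝ) * M k) ^ ((1 : ℝ) / k))
      atTop atTop)
    (hmono : ∀ j k : ℕ, 1 ≤ j → j ≤ k →
      ((j.factorial : ℝ) * M j) ^ ((1 : ℝ) / j) ≤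
        ((k.factorial : ℝ) * M k) ^ ((1 : ℝ) / k))
    (hest : ∀ p j : ℕ, 1 ≤ p → 1 ≤ j →
      (N p) ^ ((1 : ℝ) / p) ≤ C₂ * (M (p * j)) ^ ((1 : ℝ) / (p * j : ℕ))) :
    ∃ C₃ : ℝ, 0 < C₃ ∧ ∀ p k : ℕ, 1 ≤ p → p ≤ k →
      (N p) ^ ((1 : ℝ) / p) ≤ C₃ * (M k) ^ ((1 : ℝ) / k) :=
  interpolate_root_estimate_general M N C₂ hM hC₂ hmono hest
end

section
/- Define μ k for k ≥ 1 by: μ 1 = μ 2 = 1, μ k = r^k if k = kᵢ (where k₁ = 3 and k_{i+1} = kᵢ * ⌈log(i+2)⌉), μ k = r^{kᵢ - 1} if kᵢ < k < k_{i+1}, with fixed r ≥ 4; and let M k := (1/k!) ∏_{j=1}^k μ j. Then M j * M k ≤ M 1 * M (j + k − 1) for all j, k ≥ 1. -/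
open scoped Classical

/-- The index sequence: `k₁ = 3`, `k_{i+1} = kᵢ * ⌈log (i+2)⌉` (0-based: `kseq i = k_{i+1}`). -/
noncomputable def kseq : ℕ → ℕ
  | 0 => 3
  | (i + 1) => kseq i * ⌈Real.log ((i : ℝ) + 3)⌉₊

/-- The largest member of the index sequence that is `≤ k`. -/
noncomputable def prevIdx (k : ℕ) : ℕ :=
  Nat.findGreatest (fun m => ∃ i, kseq i = m) k

/-- The quotient sequence `μ`. -/
noncomputable def mu (r : ℝ) (k : ℕ) : ℝ :=
  if k ≤ 2 then 1
  else if ∃ i, kseq i = k then r ^ k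
  else r ^ (prevIdx k - 1)

/-- The weight sequence `M k = (1/k!) ∏_{j=1}^k μ j`. -/
noncomputable def Mseq (r : ℝ) (k : ℕ) : ℝ :=
  (1 / k.factorial) * ∏ j ∈ Finset.Icc 1 k, mu r j

/-!
Write `μ l = r ^ f l`, so that `M n = r ^ e n / n!` with `e n = f 1 + ⋯ + f n`, and think of
`s n = M n ^ (1 / (n - 1))`. If `s j ≤ s m` and `s k ≤ s m` for `m = j + k - 1`, then
`M j * M k = s j ^ (j - 1) * s k ^ (k - 1) ≤ s m ^ (m - 1) = M m`.

The step `s n ≤ s (n + 1)` is `M n ≤ (μ (n + 1) / (n + 1)) ^ (n - 1)`. It follows from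
`(n + 1) ^ (n - 1) ≤ 4 ^ (n - 2) * n!` (the ratios are `(1 + 1/(n+1)) ^ n ≤ e`) and
`e n + (n - 2) ≤ (n - 1) * f (n + 1)`. For the latter, when `kseq i ≤ n < kseq (i + 1)`, every
`f l` with `l < kseq i` is at most `kseq i / 2` because `kseq` at least doubles, while the gap
is short because the ratios `⌈log (i + 3)⌉` grow slowly. The step fails only from `4` to `5`
(when `r < 5.2`); this is bridged by `s 3 ≤ s 5`, `s 4 ≤ s 6` and the check `M 2 * M 4 ≤ M 5`.
-/

open Real
open scoped Nat

section PowerInequalities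

variable {R : Type*} [CommSemiring R] [LinearOrder R] [IsStrictOrderedRing R] {x y z : R}

lemma pow_le_pow_trans {a b c : ℕ} (hb : b ≠ 0) (hx : 0 ≤ x) (hy : 0 ≤ y) (hz : 0 ≤ z)
    (hxy : x ^ b ≤ y ^ a) (hyz : y ^ c ≤ z ^ b) : x ^ c ≤ z ^ a := by
  refine le_of_pow_le_pow_left₀ hb (by positivity) ?_
  calc (x ^ c) ^ b = (x ^ b) ^ c := by rw [← pow_mul, ← pow_mul, Nat.mul_comm]
    _ ≤ (y ^ a) ^ c := pow_le_pow_left₀ (by positivity) hxy c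
    _ = (y ^ c) ^ a := by rw [← pow_mul, ← pow_mul, Nat.mul_comm]
    _ ≤ (z ^ b) ^ a := pow_le_pow_left₀ (by positivity) hyz a
    _ = (z ^ a) ^ b := by rw [← pow_mul, ← pow_mul, Nat.mul_comm]

lemma mul_le_of_pow_add_le {a b : ℕ} (hab : a + b ≠ 0) (hy : 0 ≤ y) (hz : 0 ≤ z)
    (hx : x ^ (a + b) ≤ z ^ a) (hy' : y ^ (a + b) ≤ z ^ b) : x * y ≤ z := by
  refine le_of_pow_le_pow_left₀ hab hz ?_
  calc (x * y) ^ (a + b) = x ^ (a + b) * y ^ (a + b) := mul_pow x y _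
    _ ≤ z ^ a * z ^ b := mul_le_mul hx hy' (by positivity) (by positivity)
    _ = z ^ (a + b) := (pow_add z a b).symm

lemma pow_succ_le_mul_pow {a : R} {m : ℕ} (hx : 0 ≤ x) (h : x ≤ a ^ m) :
    x ^ (m + 1) ≤ (x * a) ^ m := by
  rw [pow_succ, mul_pow]
  exact mul_le_mul_of_nonneg_left h (by positivity)

end PowerInequalities

lemma add_two_pow_le (n : ℕ) : ((n : ℝ) + 2) ^ n ≤ 4 * ((n : ℝ) + 1) ^ n := by
  have hsplit : (n : ℝ) + 2 = (n + 1) * (1 + ((n + 1 : ℕ) : ℝ)⁻¹) := by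
    push_cast; field_simp; ring
  have hbase : (1 + ((n + 1 : ℕ) : ℝ)⁻¹) ^ n ≤ 4 :=
    calc (1 + ((n + 1 : ℕ) : ℝ)⁻¹) ^ n ≤ (1 + ((n + 1 : ℕ) : ℝ)⁻¹) ^ (n + 1) :=
          pow_le_pow_right₀ (le_add_of_nonneg_right (by positivity)) n.le_succ
      _ ≤ exp 1 := one_add_inv_pow_le_exp
      _ ≤ 4 := exp_one_lt_d9.le.trans (by norm_num)
  rw [hsplit, mul_pow, mul_comm 4]
  exact mul_le_mul_of_nonneg_left hbase (by positivity)

lemma add_one_pow_le_four_pow_mul_factorial {n : ℕ} (hn : 3 ≤ n) :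
    ((n : ℝ) + 1) ^ (n - 1) ≤ 4 ^ (n - 2) * n ! := by
  induction n, hn using Nat.le_induction with
  | base => norm_num [Nat.factorial]
  | succ n hn ih =>
    rw [show n + 1 - 1 = n by omega, show n + 1 - 2 = n - 2 + 1 by omega]
    push_cast
    calc ((n : ℝ) + 1 + 1) ^ n = (n + 2) ^ n := by ring
      _ ≤ 4 * (n + 1) ^ n := add_two_pow_le n
      _ = 4 * ((n + 1) * (n + 1) ^ (n - 1)) := by
        rw [← pow_succ' ((n : ℝ) + 1), Nat.sub_one_add_one (by omega)]
      _ ≤ 4 * ((n + 1) * (4 ^ (n - 2) * n !)) := by gcongr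
      _ = 4 ^ (n - 2 + 1) * (n + 1)! := by rw [Nat.factorial_succ]; push_cast; ring

section IndexSequence

lemma two_le_ceil_log (i : ℕ) : 2 ≤ ⌈log ((i : ℝ) + 3)⌉₊ := by
  refine Nat.lt_ceil.2 ?_
  rw [Nat.cast_one, lt_log_iff_exp_lt (by positivity)]
  have := exp_one_lt_d9
  have : (0 : ℝ) ≤ i := i.cast_nonneg
  linarith

lemma ceil_log_le (i : ℕ) : ⌈log ((i : ℝ) + 3)⌉₊ ≤ max (i + 1) 2 := by
  rw [Nat.ceil_le, log_le_iff_le_exp (by positivity)]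
  set x : ℝ := ((max (i + 1) 2 : ℕ) : ℝ)
  have hx : ((i + 1 : ℕ) : ℝ) ≤ x ∧ ((2 : ℕ) : ℝ) ≤ x :=
    ⟨Nat.cast_le.2 (le_max_left _ _), Nat.cast_le.2 (le_max_right _ _)⟩
  push_cast at hx
  nlinarith [quadratic_le_exp_of_nonneg (show (0 : ℝ) ≤ x by linarith)]

lemma kseq_succ (i : ℕ) : kseq (i + 1) = kseq i * ⌈log ((i : ℝ) + 3)⌉₊ := rfl

lemma two_mul_kseq_le_succ (i : ℕ) : 2 * kseq i ≤ kseq (i + 1) := by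
  rw [kseq_succ, mul_comm]
  exact Nat.mul_le_mul_left _ (two_le_ceil_log i)

lemma three_le_kseq (i : ℕ) : 3 ≤ kseq i := by
  induction i with
  | zero => rfl
  | succ i ih => have := two_mul_kseq_le_succ i; omega

lemma kseq_strictMono : StrictMono kseq :=
  strictMono_nat_of_lt_succ fun i => by
    have := two_mul_kseq_le_succ i; have := three_le_kseq i; omega

lemma kseq_succ_le {i : ℕ} (hi : 1 ≤ i) : kseq (i + 1) ≤ (i + 1) * kseq i := by
  rw [kseq_succ, mul_comm]
  exact Nat.mul_le_mul_right _ ((ceil_log_le i).trans (by omega))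

lemma kseq_one : kseq 1 = 6 := by
  rw [kseq_succ, show kseq 0 = 3 from rfl]
  have := two_le_ceil_log 0
  have := ceil_log_le 0
  simp only [Nat.cast_zero] at *
  omega

lemma two_mul_add_five_le_kseq {i : ℕ} (hi : 2 ≤ i) : 2 * i + 5 ≤ kseq i := by
  induction i, hi using Nat.le_induction with
  | base =>
    have : 2 * kseq 1 ≤ kseq 2 := two_mul_kseq_le_succ 1
    rw [kseq_one] at this
    omega
  | succ i _ ih => have := two_mul_kseq_le_succ i; omega

lemma two_mul_add_three_mul_kseq_le {n i : ℕ} (hn : n + 1 < kseq (i + 1)) (h4 : n ≠ 4) :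
    2 * n + 3 * kseq i ≤ kseq i ^ 2 + 6 := by
  rcases i with _ | _ | i
  · rw [kseq_one] at hn
    show 2 * n + 3 * 3 ≤ 3 ^ 2 + 6
    omega
  · have : kseq 2 ≤ 2 * kseq 1 := kseq_succ_le le_rfl
    change n + 1 < kseq 2 at hn
    rw [kseq_one] at this ⊢
    omega
  · have hsucc := kseq_succ_le (i := i + 2) (by omega)
    have hk := two_mul_add_five_le_kseq (i := i + 2) (by omega)
    nlinarith

lemma exists_kseq_le_lt {l : ℕ} (hl : 3 ≤ l) : ∃ i, kseq i ≤ l ∧ l < kseq (i + 1) := by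
  obtain ⟨i, hi⟩ : ∃ i, kseq i = prevIdx l :=
    Nat.findGreatest_spec (P := fun m => ∃ i, kseq i = m) hl ⟨0, rfl⟩
  refine ⟨i, hi ▸ Nat.findGreatest_le l, ?_⟩
  by_contra! h
  exact Nat.findGreatest_is_greatest (hi ▸ kseq_strictMono i.lt_succ_self) h ⟨i + 1, rfl⟩

lemma not_exists_kseq_eq {i l : ℕ} (h1 : kseq i < l) (h2 : l < kseq (i + 1)) :
    ¬ ∃ j, kseq j = l := by
  rintro ⟨j, rfl⟩
  have := kseq_strictMono.lt_iff_lt.1 h1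
  have := kseq_strictMono.lt_iff_lt.1 h2
  omega

lemma prevIdx_eq {i l : ℕ} (h1 : kseq i ≤ l) (h2 : l < kseq (i + 1)) : prevIdx l = kseq i :=
  Nat.findGreatest_eq_iff.2 ⟨h1, fun _ => ⟨i, rfl⟩, fun _ hlt hle =>
    not_exists_kseq_eq hlt (hle.trans_lt h2)⟩

end IndexSequence

section Exponents

noncomputable def muExp (k : ℕ) : ℕ :=
  if k ≤ 2 then 0 else if ∃ i, kseq i = k then k else prevIdx k - 1

noncomputable def muExpSum : ℕ → ℕ
  | 0 => 0
  | n + 1 => muExpSum n + muExp (n + 1)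

lemma mu_eq_pow (r : ℝ) (k : ℕ) : mu r k = r ^ muExp k := by
  unfold mu muExp
  split_ifs <;> simp

lemma muExp_of_le_two {k : ℕ} (hk : k ≤ 2) : muExp k = 0 := if_pos hk

lemma muExp_kseq (i : ℕ) : muExp (kseq i) = kseq i := by
  rw [muExp, if_neg (by have := three_le_kseq i; omega), if_pos ⟨i, rfl⟩]

lemma muExp_of_lt_of_lt {i l : ℕ} (h1 : kseq i < l) (h2 : l < kseq (i + 1)) :
    muExp l = kseq i - 1 := by
  rw [muExp, if_neg (by have := three_le_kseq i; omega), if_neg (not_exists_kseq_eq h1 h2),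
    prevIdx_eq h1.le h2]

lemma muExp_le_of_le_of_lt {i l : ℕ} (h1 : kseq i ≤ l) (h2 : l < kseq (i + 1)) :
    muExp l ≤ kseq i := by
  rcases h1.eq_or_lt with rfl | h1
  · exact (muExp_kseq i).le
  · rw [muExp_of_lt_of_lt h1 h2]; omega

lemma muExp_le_self (l : ℕ) : muExp l ≤ l := by
  by_cases hl : l ≤ 2
  · rw [muExp_of_le_two hl]; exact l.zero_le
  · obtain ⟨i, h1, h2⟩ := exists_kseq_le_lt (by omega : 3 ≤ l)
    exact (muExp_le_of_le_of_lt h1 h2).trans h1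

lemma two_mul_muExp_le_kseq {i l : ℕ} (hl : l < kseq i) : 2 * muExp l ≤ kseq i := by
  by_cases hl2 : l ≤ 2
  · rw [muExp_of_le_two hl2]; exact Nat.zero_le _
  obtain ⟨j, h1, h2⟩ := exists_kseq_le_lt (by omega : 3 ≤ l)
  have hji : j + 1 ≤ i := kseq_strictMono.lt_iff_lt.1 (h1.trans_lt hl)
  have := muExp_le_of_le_of_lt h1 h2
  have := two_mul_kseq_le_succ j
  have := kseq_strictMono.monotone hji
  omega

lemma two_mul_muExpSum_le (n : ℕ) : 2 * muExpSum n ≤ n * (n + 1) := by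
  induction n with
  | zero => rfl
  | succ n ih =>
    have := muExp_le_self (n + 1)
    rw [muExpSum]
    nlinarith

lemma muExpSum_two : muExpSum 2 = 0 := by
  simp [muExpSum, muExp_of_le_two]

lemma muExp_three : muExp 3 = 3 := muExp_kseq 0

lemma muExp_four : muExp 4 = 2 := muExp_of_lt_of_lt (i := 0) (by decide) (by rw [kseq_one]; omega)

lemma muExp_five : muExp 5 = 2 := muExp_of_lt_of_lt (i := 0) (by decide) (by rw [kseq_one]; omega)

lemma muExp_six : muExp 6 = 6 := kseq_one ▸ muExp_kseq 1

lemma muExpSum_three : muExpSum 3 = 3 := by rw [muExpSum, muExpSum_two, muExp_three]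

lemma muExpSum_four : muExpSum 4 = 5 := by rw [muExpSum, muExpSum_three, muExp_four]

lemma muExpSum_five : muExpSum 5 = 7 := by rw [muExpSum, muExpSum_four, muExp_five]

lemma muExpSum_six : muExpSum 6 = 13 := by rw [muExpSum, muExpSum_five, muExp_six]

lemma two_mul_muExpSum_le_of_lt_kseq {i n : ℕ} (h2 : 2 ≤ n) (hn : n < kseq i) :
    2 * muExpSum n ≤ (n - 2) * kseq i := by
  induction n, h2 using Nat.le_induction with
  | base => simp [muExpSum_two]
  | succ n h2 ih =>
    have := two_mul_muExp_le_kseq hn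
    have := ih (by omega)
    rw [muExpSum, show n + 1 - 2 = n - 2 + 1 by omega, add_one_mul (n - 2)]
    omega

lemma muExpSum_of_le_of_lt {i n : ℕ} (h1 : kseq i ≤ n) (h2 : n < kseq (i + 1)) :
    muExpSum n = muExpSum (kseq i) + (n - kseq i) * (kseq i - 1) := by
  induction n, h1 using Nat.le_induction with
  | base => simp
  | succ n h1 ih =>
    rw [muExpSum, ih (by omega), muExp_of_lt_of_lt (by omega) h2,
      show n + 1 - kseq i = n - kseq i + 1 by omega, add_one_mul, add_assoc]

lemma muExpSum_add_le {n : ℕ} (h2 : 2 ≤ n) (h4 : n ≠ 4) :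
    muExpSum n + (n - 2) ≤ (n - 1) * muExp (n + 1) := by
  obtain ⟨i, hle, hlt⟩ := exists_kseq_le_lt (by omega : 3 ≤ n + 1)
  have hp3 := three_le_kseq i
  rcases hle.eq_or_lt with heq | hlt'
  · rw [← heq, muExp_kseq, heq]
    have := two_mul_muExpSum_le n
    obtain ⟨m, rfl⟩ : ∃ m, n = m + 2 := ⟨n - 2, by omega⟩
    simp only [Nat.add_sub_cancel, show m + 2 - 1 = m + 1 by omega]
    nlinarith
  · rw [muExp_of_lt_of_lt hlt' hlt, muExpSum_of_le_of_lt (i := i) (n := n) (by omega) (by omega)]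
    have hsplit : muExpSum (kseq i) = muExpSum (kseq i - 1) + kseq i := by
      conv_lhs => rw [← Nat.sub_one_add_one (by omega : kseq i ≠ 0)]
      rw [muExpSum, Nat.sub_one_add_one (by omega), muExp_kseq]
    have hbelow := two_mul_muExpSum_le_of_lt_kseq (i := i) (n := kseq i - 1) (by omega) (by omega)
    have hn := two_mul_add_three_mul_kseq_le hlt h4
    rw [hsplit]
    -- With `p = q + 3` and `n = p + t`, the goal is half the sum of `hbelow` and `hn`.
    generalize kseq i = p at *
    obtain ⟨q, rfl⟩ : ∃ q, p = q + 3 := ⟨p - 3, by omega⟩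
    obtain ⟨t, rfl⟩ : ∃ t, n = q + 3 + t := ⟨n - (q + 3), by omega⟩
    simp only [show q + 2 - 2 = q by omega, show q + 3 + t - (q + 3) = t by omega,
      show q + 3 - 1 = q + 2 by omega, show q + 3 + t - 2 = q + 1 + t by omega,
      show q + 3 + t - 1 = q + 2 + t by omega] at *
    nlinarith

end Exponents

section Weights

lemma Mseq_succ (r : ℝ) (n : ℕ) : Mseq r (n + 1) = Mseq r n * (mu r (n + 1) / (n + 1)) := by
  unfold Mseq
  rw [Finset.prod_Icc_succ_top (by omega), Nat.factorial_succ]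
  push_cast
  field_simp

lemma Mseq_eq_pow_div_factorial (r : ℝ) (n : ℕ) : Mseq r n = r ^ muExpSum n / n ! := by
  induction n with
  | zero => simp [Mseq, muExpSum]
  | succ n ih =>
    rw [Mseq_succ, ih, mu_eq_pow, muExpSum, pow_add, Nat.factorial_succ]
    push_cast
    field_simp

lemma Mseq_one (r : ℝ) : Mseq r 1 = 1 := by
  simp [Mseq_eq_pow_div_factorial, muExpSum, muExp_of_le_two]

variable {r : ℝ}

lemma Mseq_nonneg (hr : 0 ≤ r) (n : ℕ) : 0 ≤ Mseq r n := by
  rw [Mseq_eq_pow_div_factorial]; positivity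

lemma Mseq_le_mu_succ_div_pow (hr : 4 ≤ r) {n : ℕ} (h2 : 2 ≤ n) (h4 : n ≠ 4) :
    Mseq r n ≤ (mu r (n + 1) / (n + 1)) ^ (n - 1) := by
  rw [Mseq_eq_pow_div_factorial, mu_eq_pow, div_pow, ← pow_mul]
  rcases h2.eq_or_lt with rfl | h3
  · rw [muExpSum_two, muExp_three]
    norm_num [Nat.factorial]
    nlinarith [pow_le_pow_left₀ (by norm_num) hr 3]
  have hexp : muExpSum n + (n - 2) ≤ muExp (n + 1) * (n - 1) :=
    (muExpSum_add_le h2 h4).trans_eq (mul_comm _ _)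
  have hfac : ((n : ℝ) + 1) ^ (n - 1) ≤ r ^ (n - 2) * n ! :=
    (add_one_pow_le_four_pow_mul_factorial h3).trans (by gcongr)
  calc r ^ muExpSum n / n ! = r ^ (muExpSum n + (n - 2)) / (r ^ (n - 2) * n !) := by
        rw [pow_add, mul_comm (r ^ (n - 2)) _, mul_div_mul_right _ _ (by positivity)]
    _ ≤ r ^ (muExp (n + 1) * (n - 1)) / ((n : ℝ) + 1) ^ (n - 1) :=
        div_le_div₀ (by positivity) (pow_le_pow_right₀ (by linarith) hexp) (by positivity) hfac

lemma Mseq_pow_le_Mseq_succ_pow (hr : 4 ≤ r) {n : ℕ} (h2 : 2 ≤ n) (h4 : n ≠ 4) :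
    Mseq r n ^ n ≤ Mseq r (n + 1) ^ (n - 1) := by
  obtain ⟨m, rfl⟩ : ∃ m, n = m + 1 := ⟨n - 1, by omega⟩
  rw [Mseq_succ r (m + 1), Nat.add_sub_cancel]
  exact pow_succ_le_mul_pow (Mseq_nonneg (by linarith) _) (Mseq_le_mu_succ_div_pow hr h2 h4)

lemma Mseq_three_pow_le (hr : 4 ≤ r) : Mseq r 3 ^ 4 ≤ Mseq r 5 ^ 2 := by
  simp only [Mseq_eq_pow_div_factorial, muExpSum_three, muExpSum_five]
  norm_num [Nat.factorial]
  nlinarith [pow_le_pow_left₀ (by norm_num) hr 2, pow_pos (show 0 < r by linarith) 12]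

lemma Mseq_four_pow_le (hr : 4 ≤ r) : Mseq r 4 ^ 5 ≤ Mseq r 6 ^ 3 := by
  simp only [Mseq_eq_pow_div_factorial, muExpSum_four, muExpSum_six]
  norm_num [Nat.factorial]
  nlinarith [pow_le_pow_left₀ (by norm_num) hr 14, pow_pos (show 0 < r by linarith) 25]

lemma Mseq_two_mul_Mseq_four_le (hr : 4 ≤ r) : Mseq r 2 * Mseq r 4 ≤ Mseq r 5 := by
  simp only [Mseq_eq_pow_div_factorial, muExpSum_two, muExpSum_four, muExpSum_five]
  norm_num [Nat.factorial]
  nlinarith [pow_le_pow_left₀ (by norm_num) hr 2, pow_pos (show 0 < r by linarith) 5]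

lemma Mseq_pow_le_pow_of_forall_ne_four (hr : 4 ≤ r) {j m : ℕ} (hj : 2 ≤ j) (hjm : j ≤ m)
    (h4 : ∀ n, j ≤ n → n < m → n ≠ 4) : Mseq r j ^ (m - 1) ≤ Mseq r m ^ (j - 1) := by
  induction m, hjm using Nat.le_induction with
  | base => exact le_rfl
  | succ m hjm ih =>
    have h0 := Mseq_nonneg (r := r) (by linarith)
    rw [Nat.add_sub_cancel]
    exact pow_le_pow_trans (by omega) (h0 j) (h0 m) (h0 (m + 1))
      (ih fun n h1 h2 => h4 n h1 (by omega))
      (Mseq_pow_le_Mseq_succ_pow hr (by omega) (h4 m hjm (by omega)))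

lemma Mseq_pow_le_pow (hr : 4 ≤ r) {j m : ℕ} (hj : 2 ≤ j) (hjm : j ≤ m)
    (h45 : ¬(j = 4 ∧ m = 5)) :
    Mseq r j ^ (m - 1) ≤ Mseq r m ^ (j - 1) := by
  by_cases hplain : m ≤ 4 ∨ 5 ≤ j
  · exact Mseq_pow_le_pow_of_forall_ne_four hr hj hjm (by omega)
  obtain ⟨hm4, hj5⟩ : 4 < m ∧ j < 5 := by omega
  have h0 := Mseq_nonneg (r := r) (by linarith)
  have hfrom : ∀ l, 5 ≤ l → l ≤ m → Mseq r l ^ (m - 1) ≤ Mseq r m ^ (l - 1) :=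
    fun l hl hlm => Mseq_pow_le_pow_of_forall_ne_four hr (by omega) hlm (by omega)
  interval_cases j
  · have h23 : Mseq r 2 ^ 2 ≤ Mseq r 3 ^ 1 := Mseq_pow_le_Mseq_succ_pow hr le_rfl (by norm_num)
    have h25 : Mseq r 2 ^ 4 ≤ Mseq r 5 ^ 1 :=
      pow_le_pow_trans (b := 2) (by norm_num) (h0 _) (h0 _) (h0 _) h23 (Mseq_three_pow_le hr)
    exact pow_le_pow_trans (by norm_num) (h0 _) (h0 _) (h0 _) h25 (hfrom 5 le_rfl (by omega))
  · exact pow_le_pow_trans (by norm_num) (h0 _) (h0 _) (h0 _) (Mseq_three_pow_le hr)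
      (hfrom 5 le_rfl (by omega))
  · exact pow_le_pow_trans (by norm_num) (h0 _) (h0 _) (h0 _) (Mseq_four_pow_le hr)
      (hfrom 6 (by norm_num) (by omega))

end Weights

theorem example_sequence_almost_logconvex (r : ℝ) (hr : 4 ≤ r) :
    ∀ j k : ℕ, 1 ≤ j → 1 ≤ k →
      Mseq r j * Mseq r k ≤ Mseq r 1 * Mseq r (j + k - 1) := by
  intro j k hj hk
  rw [Mseq_one, one_mul]
  rcases hj.eq_or_lt with rfl | hj
  · rw [Mseq_one, one_mul, Nat.add_sub_cancel_left]
  rcases hk.eq_or_lt with rfl | hk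
  · rw [Mseq_one, mul_one, Nat.add_sub_cancel]
  by_cases h24 : j = 2 ∧ k = 4 ∨ j = 4 ∧ k = 2
  · rcases h24 with ⟨rfl, rfl⟩ | ⟨rfl, rfl⟩
    · exact Mseq_two_mul_Mseq_four_le hr
    · rw [mul_comm]; exact Mseq_two_mul_Mseq_four_le hr
  have h0 := Mseq_nonneg (r := r) (by linarith)
  have hm : j + k - 1 - 1 = (j - 1) + (k - 1) := by omega
  refine mul_le_of_pow_add_le (a := j - 1) (b := k - 1) (by omega) (h0 k) (h0 _) ?_ ?_ <;>
    rw [← hm]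
  · exact Mseq_pow_le_pow hr hj (by omega) (by omega)
  · exact Mseq_pow_le_pow hr hk (by omega) (by omega)
end
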